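/- Let $0 < \alpha < 1$, $p = n/(n+\alpha)$, and let $a$ be an integrable function supported in the cube $Q = Q(x_0, r)$ with $\int a = 0$ and $\int_Q |a(y)|\,dy \le |Q| \cdot w(Q)^{-1/p}$. Then for every $x \notin 2\sqrt{n}\, Q$, the intrinsic Lusin area function satisfies $S_\alpha(a)(x) \le C \cdot \frac{r^{n+\alpha}}{w(Q)^{1/p}} \cdot \frac{1}{|x - x_0|^{n+\alpha}} \le C' \cdot w(Q)^{-1/p}$, with constants depending only on $n$ and $\alpha$. -/

import Mathlib

open MeasureTheory Set Metric ENNReal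

noncomputable section

/-- The axis-parallel cube centered at `x0` with side length `r`. -/
def cube (n : ℕ) (x0 : EuclideanSpace ℝ (Fin n)) (r : ℝ) : Set (EuclideanSpace ℝ (Fin n)) :=
  {x | ∀ i, |x i - x0 i| ≤ r / 2}

/-- The weighted measure `w(E) = ∫_E w`. -/
def wm (n : ℕ) (w : EuclideanSpace ℝ (Fin n) → ℝ) (s : Set (EuclideanSpace ℝ (Fin n))) : ℝ≥0∞ :=
  ∫⁻ x in s, ENNReal.ofReal (w x)

/-- The intrinsic Hölder class 𝒞_α. -/
def holderClass (n : ℕ) (α : ℝ) : Set (EuclideanSpace ℝ (Fin n) → ℝ) :=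
  {φ | Function.support φ ⊆ closedBall 0 1 ∧ (∫ x, φ x = 0) ∧
    ∀ x x', |φ x - φ x'| ≤ ‖x - x'‖ ^ α}

/-- `f * φ_t (x)` where `φ_t(x) = t^{-n} φ(x/t)`. -/
def convDil (n : ℕ) (f φ : EuclideanSpace ℝ (Fin n) → ℝ) (t : ℝ) (x : EuclideanSpace ℝ (Fin n)) : ℝ :=
  ∫ y, f y * ((t ^ n)⁻¹ * φ (t⁻¹ • (x - y)))

/-- `A_α(f)(y,t) = sup_{φ ∈ 𝒞_α} |f * φ_t(y)|`. -/
def intA (n : ℕ) (α : ℝ) (f : EuclideanSpace ℝ (Fin n) → ℝ) (y : EuclideanSpace ℝ (Fin n)) (t : ℝ) : ℝ≥0∞ :=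
  ⨆ φ ∈ holderClass n α, ENNReal.ofReal |convDil n f φ t y|

/-- The intrinsic Littlewood–Paley g-function. -/
def gFun (n : ℕ) (α : ℝ) (f : EuclideanSpace ℝ (Fin n) → ℝ) (x : EuclideanSpace ℝ (Fin n)) : ℝ≥0∞ :=
  (∫⁻ t in Ioi (0 : ℝ), (intA n α f x t) ^ 2 * (ENNReal.ofReal t)⁻¹) ^ (1/2 : ℝ)

/-- The varying-aperture intrinsic square function `S_{α,β}`. -/
def sFun (n : ℕ) (α β : ℝ) (f : EuclideanSpace ℝ (Fin n) → ℝ) (x : EuclideanSpace ℝ (Fin n)) : ℝ≥0∞ :=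
  (∫⁻ t in Ioi (0 : ℝ), ∫⁻ y in ball x (β * t),
      (intA n α f y t) ^ 2 * (ENNReal.ofReal (t ^ (n + 1)))⁻¹) ^ (1/2 : ℝ)

/-- The intrinsic `g^*_λ` function. -/
def gStar (n : ℕ) (α lam : ℝ) (f : EuclideanSpace ℝ (Fin n) → ℝ) (x : EuclideanSpace ℝ (Fin n)) : ℝ≥0∞ :=
  (∫⁻ t in Ioi (0 : ℝ), ∫⁻ y,
      (ENNReal.ofReal (t / (t + ‖x - y‖))) ^ (lam * n) *
        (intA n α f y t) ^ 2 * (ENNReal.ofReal (t ^ (n + 1)))⁻¹) ^ (1/2 : ℝ)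

/-- The `A_1` condition with constant `A`. -/
def isA1 (n : ℕ) (w : EuclideanSpace ℝ (Fin n) → ℝ) (A : ℝ) : Prop :=
  ∀ (x0 : EuclideanSpace ℝ (Fin n)) (r : ℝ), 0 < r →
    (∫ x in cube n x0 r, w x) ≤ A * r ^ n * essInf w (volume.restrict (cube n x0 r))

/-- The `A_q` condition, `q > 1`, with constant `A`. -/
def isAq (n : ℕ) (w : EuclideanSpace ℝ (Fin n) → ℝ) (q A : ℝ) : Prop :=
  ∀ (x0 : EuclideanSpace ℝ (Fin n)) (r : ℝ), 0 < r →
    ((r ^ n)⁻¹ * ∫ x in cube n x0 r, w x) *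
      ((r ^ n)⁻¹ * ∫ x in cube n x0 r, (w x) ^ (-(1 / (q - 1)) : ℝ)) ^ (q - 1) ≤ A

end

/-!
Since `∫ a = 0`, one may replace `φ_t(y - z)` by `φ_t(y - z) - φ_t(y - x₀)` in `a * φ_t(y)`, and the
Hölder condition gives `|a * φ_t(y)| ≤ ‖a‖₁ ρ^α t^(-(n+α))`, where `ρ = √n r / 2` is the
circumradius of `Q`. For `x ∉ 2√n Q` and `(y, t) ∈ Γ(x)` with `t ≤ |x - x₀| / 4` the ball `B(y, t)`
misses `Q`, so `A_α(a)(y, t) = 0`. Integrating over the rest of the cone,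
`S_α(a)(x)² ≲ ∫_{|x-x₀|/4}^∞ ‖a‖₁² ρ^(2α) t^(-2(n+α)-1) dt ≍ (‖a‖₁ r^α / |x - x₀|^(n+α))²`,
and the size condition `‖a‖₁ ≤ r^n w(Q)^(-1/p)` together with `r ≤ |x - x₀|` gives both bounds.
-/

section

variable {n : ℕ} {α : ℝ} {φ a : EuclideanSpace ℝ (Fin n) → ℝ}

lemma continuous_of_mem_holderClass (hα : 0 < α) (hφ : φ ∈ holderClass n α) : Continuous φ := by
  rw [Metric.continuous_iff]
  intro x ε hε
  refine ⟨ε ^ α⁻¹, Real.rpow_pos_of_pos hε _, fun x' hx' => ?_⟩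
  calc dist (φ x') (φ x) ≤ dist x' x ^ α := hφ.2.2 x' x
    _ < (ε ^ α⁻¹) ^ α := Real.rpow_lt_rpow dist_nonneg hx' hα
    _ = ε := Real.rpow_inv_rpow hε.le hα.ne'

lemma hasCompactSupport_of_mem_holderClass (hφ : φ ∈ holderClass n α) : HasCompactSupport φ :=
  (isCompact_closedBall 0 1).of_isClosed_subset isClosed_closure
    (closure_minimal hφ.1 isClosed_closedBall)

lemma integrable_mul_dilate_of_mem_holderClass (hα : 0 < α) (hφ : φ ∈ holderClass n α)
    (ha : Integrable a) (t : ℝ) (y : EuclideanSpace ℝ (Fin n)) :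
    Integrable (fun z => a z * ((t ^ n)⁻¹ * φ (t⁻¹ • (y - z)))) := by
  have hcont := continuous_of_mem_holderClass hα hφ
  obtain ⟨C, hC⟩ := hcont.bounded_above_of_compact_support (hasCompactSupport_of_mem_holderClass hφ)
  refine ha.mul_bdd (c := |(t ^ n)⁻¹| * C) (by fun_prop) (ae_of_all _ fun z => ?_)
  rw [norm_mul, Real.norm_eq_abs]
  exact mul_le_mul_of_nonneg_left (hC _) (abs_nonneg _)

lemma abs_dilate_sub_dilate_le (hφ : φ ∈ holderClass n α) {t : ℝ} (ht : 0 < t)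
    (y z x0 : EuclideanSpace ℝ (Fin n)) :
    |(t ^ n)⁻¹ * φ (t⁻¹ • (y - z)) - (t ^ n)⁻¹ * φ (t⁻¹ • (y - x0))| ≤
      ‖z - x0‖ ^ α / t ^ ((n : ℝ) + α) := by
  have hholder : |φ (t⁻¹ • (y - z)) - φ (t⁻¹ • (y - x0))| ≤ (t⁻¹ * ‖z - x0‖) ^ α := by
    refine (hφ.2.2 _ _).trans_eq ?_
    rw [← smul_sub, show y - z - (y - x0) = x0 - z by abel, norm_smul, norm_inv,
      Real.norm_eq_abs, abs_of_pos ht, norm_sub_rev]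
  calc |(t ^ n)⁻¹ * φ (t⁻¹ • (y - z)) - (t ^ n)⁻¹ * φ (t⁻¹ • (y - x0))|
      = (t ^ n)⁻¹ * |φ (t⁻¹ • (y - z)) - φ (t⁻¹ • (y - x0))| := by
        rw [← mul_sub, abs_mul, abs_of_pos (by positivity)]
    _ ≤ (t ^ n)⁻¹ * (t⁻¹ * ‖z - x0‖) ^ α := by gcongr
    _ = ‖z - x0‖ ^ α / t ^ ((n : ℝ) + α) := by
        rw [Real.mul_rpow (by positivity) (norm_nonneg _), Real.inv_rpow ht.le,
          Real.rpow_add ht, Real.rpow_natCast]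
        field_simp

lemma convDil_eq_zero_of_lt_norm (hφ : Function.support φ ⊆ closedBall 0 1) {t : ℝ} (ht : 0 < t)
    {y : EuclideanSpace ℝ (Fin n)} (hfar : ∀ z ∈ Function.support a, t < ‖y - z‖) :
    convDil n a φ t y = 0 := by
  refine integral_eq_zero_of_ae (ae_of_all _ fun z => ?_)
  by_cases hz : a z = 0
  · simp [hz]
  have hout : t⁻¹ • (y - z) ∉ Function.support φ := fun hmem => by
    have := hφ hmem
    rw [mem_closedBall_zero_iff, norm_smul, norm_inv, Real.norm_eq_abs, abs_of_pos ht,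
      inv_mul_le_iff₀ ht, mul_one] at this
    exact (hfar z hz).not_ge this
  simp [Function.notMem_support.1 hout]

lemma abs_convDil_le_of_integral_eq_zero (hα : 0 < α) (hφ : φ ∈ holderClass n α)
    (ha : Integrable a) (ha0 : ∫ z, a z = 0) {x0 : EuclideanSpace ℝ (Fin n)} {ρ : ℝ}
    (hsupp : Function.support a ⊆ closedBall x0 ρ) {t : ℝ} (ht : 0 < t)
    (y : EuclideanSpace ℝ (Fin n)) :
    |convDil n a φ t y| ≤ (∫ z, |a z|) * (ρ ^ α / t ^ ((n : ℝ) + α)) := by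
  set c := (t ^ n)⁻¹ * φ (t⁻¹ • (y - x0))
  have hcancel : convDil n a φ t y = ∫ z, a z * ((t ^ n)⁻¹ * φ (t⁻¹ • (y - z)) - c) := by
    simp_rw [mul_sub]
    rw [integral_sub (integrable_mul_dilate_of_mem_holderClass hα hφ ha t y) (ha.mul_const c),
      integral_mul_const, ha0, zero_mul, sub_zero, convDil]
  have hbound : ∀ z, ‖a z * ((t ^ n)⁻¹ * φ (t⁻¹ • (y - z)) - c)‖ ≤
      |a z| * (ρ ^ α / t ^ ((n : ℝ) + α)) := fun z => by
    by_cases hz : a z = 0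
    · simp [hz]
    have hz_near : ‖z - x0‖ ≤ ρ := mem_closedBall_iff_norm.1 (hsupp hz)
    rw [norm_mul, Real.norm_eq_abs, Real.norm_eq_abs]
    gcongr
    exact (abs_dilate_sub_dilate_le hφ ht y z x0).trans (by gcongr)
  rw [hcancel, ← integral_mul_const, ← Real.norm_eq_abs]
  exact norm_integral_le_of_norm_le (ha.abs.mul_const _) (ae_of_all _ hbound)

lemma intA_eq_zero_of_lt_norm {t : ℝ} (ht : 0 < t)
    {y : EuclideanSpace ℝ (Fin n)} (hfar : ∀ z ∈ Function.support a, t < ‖y - z‖) :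
    intA n α a y t = 0 :=
  le_antisymm (iSup₂_le fun _ hφ => by rw [convDil_eq_zero_of_lt_norm hφ.1 ht hfar]; simp)
    zero_le

lemma intA_le_of_integral_eq_zero (hα : 0 < α) (ha : Integrable a) (ha0 : ∫ z, a z = 0)
    {x0 : EuclideanSpace ℝ (Fin n)} {ρ : ℝ}
    (hsupp : Function.support a ⊆ closedBall x0 ρ) {t : ℝ} (ht : 0 < t)
    (y : EuclideanSpace ℝ (Fin n)) :
    intA n α a y t ≤ ENNReal.ofReal ((∫ z, |a z|) * ρ ^ α / t ^ ((n : ℝ) + α)) :=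
  iSup₂_le fun _ hφ => ENNReal.ofReal_le_ofReal <|
    (abs_convDil_le_of_integral_eq_zero hα hφ ha ha0 hsupp ht y).trans_eq (mul_div_assoc _ _ _).symm

lemma setLIntegral_ball_sq_mul_inv_pow_le {F : EuclideanSpace ℝ (Fin n) → ℝ≥0∞}
    {x : EuclideanSpace ℝ (Fin n)} {t c : ℝ} (ht : 0 < t) (hc : 0 ≤ c)
    (hF : ∀ y ∈ ball x t, F y ≤ ENNReal.ofReal c) :
    ∫⁻ y in ball x t, F y ^ 2 * (ENNReal.ofReal (t ^ (n + 1)))⁻¹ ≤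
      ENNReal.ofReal ((volume (ball (0 : EuclideanSpace ℝ (Fin n)) 1)).toReal * c ^ 2 / t) := by
  calc ∫⁻ y in ball x t, F y ^ 2 * (ENNReal.ofReal (t ^ (n + 1)))⁻¹
      ≤ ∫⁻ _ in ball x t, ENNReal.ofReal c ^ 2 * (ENNReal.ofReal (t ^ (n + 1)))⁻¹ :=
        setLIntegral_mono' measurableSet_ball fun y hy => by gcongr; exact hF y hy
    _ = ENNReal.ofReal ((volume (ball (0 : EuclideanSpace ℝ (Fin n)) 1)).toReal * c ^ 2 / t) := by
        set κ := (volume (ball (0 : EuclideanSpace ℝ (Fin n)) 1)).toReal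
        have hκ : volume (ball (0 : EuclideanSpace ℝ (Fin n)) 1) = ENNReal.ofReal κ :=
          (ENNReal.ofReal_toReal measure_ball_lt_top.ne).symm
        rw [setLIntegral_const, Measure.addHaar_ball_of_pos _ _ ht, finrank_euclideanSpace_fin,
          hκ, ← ENNReal.ofReal_pow hc,
          ← ENNReal.ofReal_inv_of_pos (by positivity), ← ENNReal.ofReal_mul (by positivity),
          ← ENNReal.ofReal_mul (by positivity), ← ENNReal.ofReal_mul (by positivity)]
        congr 1
        field_simp
        ring

lemma rpow_one_half_le_ofReal_of_le_sq {I : ℝ≥0∞} {S : ℝ} (hS : 0 ≤ S)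
    (h : I ≤ ENNReal.ofReal (S ^ 2)) :
    I ^ (1 / 2 : ℝ) ≤ ENNReal.ofReal S := by
  calc I ^ (1 / 2 : ℝ) ≤ ENNReal.ofReal (S ^ 2) ^ (1 / 2 : ℝ) := by gcongr
    _ = ENNReal.ofReal S := by
        rw [ENNReal.ofReal_rpow_of_nonneg (by positivity) (by norm_num), ← Real.sqrt_eq_rpow,
          Real.sqrt_sq hS]

lemma lintegral_Ioi_ofReal_mul_rpow_neg {T β c : ℝ} (hT : 0 < T) (hβ : 0 < β) (hc : 0 ≤ c) :
    ∫⁻ t in Ioi T, ENNReal.ofReal (c * t ^ (-(2 * β + 1))) =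
      ENNReal.ofReal (c / (2 * β) / (T ^ β) ^ 2) := by
  have hq : -(2 * β + 1) < -1 := by linarith
  rw [← ofReal_integral_eq_lintegral_ofReal ((integrableOn_Ioi_rpow_of_lt hq hT).const_mul c)
    (ae_restrict_of_forall_mem measurableSet_Ioi fun t (ht : T < t) => by
      have := (hT.trans ht).le; positivity),
    integral_const_mul, integral_Ioi_rpow_of_lt hq hT, show -(2 * β + 1) + 1 = -(β * 2) by ring,
    Real.rpow_neg hT.le, Real.rpow_mul hT.le, Real.rpow_two]
  congr 1
  field_simp

lemma sFun_le_of_intA_le {x : EuclideanSpace ℝ (Fin n)}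
    {T β M : ℝ} (hT : 0 < T) (hβ : 0 < β) (hM : 0 ≤ M)
    (hvanish : ∀ t, 0 < t → t ≤ T → ∀ y ∈ ball x t, intA n α a y t = 0)
    (hdecay : ∀ t, 0 < t → ∀ y ∈ ball x t, intA n α a y t ≤ ENNReal.ofReal (M / t ^ β)) :
    sFun n α 1 a x ≤ ENNReal.ofReal
      (√((volume (ball (0 : EuclideanSpace ℝ (Fin n)) 1)).toReal / (2 * β)) * M / T ^ β) := by
  set κ := (volume (ball (0 : EuclideanSpace ℝ (Fin n)) 1)).toReal with hκ
  have hinner : ∀ t ∈ Ioi (0 : ℝ), ∫⁻ y in ball x (1 * t),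
      intA n α a y t ^ 2 * (ENNReal.ofReal (t ^ (n + 1)))⁻¹ ≤
        (Ioi T).indicator (fun t => ENNReal.ofReal (κ * M ^ 2 * t ^ (-(2 * β + 1)))) t := by
    intro t (ht : 0 < t)
    rw [one_mul]
    by_cases htT : t ≤ T
    · rw [setLIntegral_congr_fun measurableSet_ball fun y hy => by rw [hvanish t ht htT y hy]]
      simp
    · rw [indicator_of_mem (mem_Ioi.2 (not_le.1 htT))]
      refine (setLIntegral_ball_sq_mul_inv_pow_le ht (by positivity) (hdecay t ht)).trans_eq ?_
      congr 1
      rw [mul_comm 2 β, Real.rpow_neg ht.le, Real.rpow_add_one ht.ne', Real.rpow_mul ht.le,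
        Real.rpow_two, hκ]
      field_simp
  refine rpow_one_half_le_ofReal_of_le_sq (by positivity) ?_
  calc _ ≤ ∫⁻ t in Ioi (0 : ℝ),
        (Ioi T).indicator (fun t => ENNReal.ofReal (κ * M ^ 2 * t ^ (-(2 * β + 1)))) t :=
        setLIntegral_mono' measurableSet_Ioi hinner
    _ = ENNReal.ofReal (κ * M ^ 2 / (2 * β) / (T ^ β) ^ 2) := by
        rw [lintegral_indicator measurableSet_Ioi, Measure.restrict_restrict measurableSet_Ioi,
          inter_eq_self_of_subset_left (Ioi_subset_Ioi hT.le),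
          lintegral_Ioi_ofReal_mul_rpow_neg hT hβ (by positivity)]
    _ = _ := by
        rw [div_pow, mul_pow, Real.sq_sqrt (by positivity)]
        ring_nf

lemma norm_le_sqrt_card_mul_of_forall_abs_le {ι : Type*} [Fintype ι] {v : EuclideanSpace ℝ ι}
    {m : ℝ} (hm : 0 ≤ m) (hv : ∀ i, |v i| ≤ m) : ‖v‖ ≤ √(Fintype.card ι) * m := by
  rw [EuclideanSpace.norm_eq, ← Real.sqrt_sq hm, ← Real.sqrt_mul (Nat.cast_nonneg _)]
  gcongr
  calc ∑ i, ‖v i‖ ^ 2 ≤ ∑ _i : ι, m ^ 2 := Finset.sum_le_sum fun i _ => by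
        rw [Real.norm_eq_abs]; exact pow_le_pow_left₀ (abs_nonneg _) (hv i) 2
    _ = Fintype.card ι * m ^ 2 := by simp

lemma cube_subset_closedBall (x0 : EuclideanSpace ℝ (Fin n)) {r : ℝ} (hr : 0 ≤ r) :
    cube n x0 r ⊆ closedBall x0 (√n * (r / 2)) := fun z hz =>
  mem_closedBall_iff_norm.2 <| by
    simpa using norm_le_sqrt_card_mul_of_forall_abs_le (v := z - x0) (by positivity) fun i => by
      simpa using hz i

lemma lt_norm_sub_of_notMem_cube {x x0 : EuclideanSpace ℝ (Fin n)} {s : ℝ}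
    (hx : x ∉ cube n x0 s) : s / 2 < ‖x - x0‖ := by
  simp only [cube, mem_ofPred_eq, not_forall, not_le] at hx
  obtain ⟨i, hi⟩ := hx
  exact hi.trans_le (by simpa using PiLp.norm_apply_le (x - x0) i)

lemma lt_dist_of_mem_ball_of_mem_closedBall {X : Type*} [PseudoMetricSpace X] {x x0 y z : X}
    {t ρ : ℝ} (hy : y ∈ ball x t) (hz : z ∈ closedBall x0 ρ) (hρ : 2 * ρ ≤ dist x x0)
    (ht : 4 * t ≤ dist x x0) : t < dist y z := by
  have := dist_triangle4 x y z x0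
  rw [mem_ball'] at hy
  rw [mem_closedBall] at hz
  linarith

/-- The three factors come from `∫_T^∞ t^(-2(n+α)-1) dt` against `|B(0,1)|`, from the
circumradius `√n r / 2` of the cube, and from the cut-off height `T = |x - x₀| / 4`. -/
noncomputable def sFunDecayConst (n : ℕ) (α : ℝ) : ℝ :=
  √((volume (ball (0 : EuclideanSpace ℝ (Fin n)) 1)).toReal / (2 * (n + α))) * (√n / 2) ^ α *
    4 ^ ((n : ℝ) + α)

lemma sFunDecayConst_pos (hn : 1 ≤ n) (hα : 0 < α) : 0 < sFunDecayConst n α := by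
  have hball : 0 < (volume (ball (0 : EuclideanSpace ℝ (Fin n)) 1)).toReal :=
    ENNReal.toReal_pos (measure_ball_pos volume 0 one_pos).ne' measure_ball_lt_top.ne
  have hn' : (0 : ℝ) < n := by exact_mod_cast hn
  unfold sFunDecayConst
  positivity

lemma sFun_le_of_support_subset_cube (hα : 0 < α) (ha : Integrable a) (ha0 : ∫ z, a z = 0)
    {x0 x : EuclideanSpace ℝ (Fin n)} {r : ℝ} (hr : 0 < r)
    (hsupp : Function.support a ⊆ cube n x0 r) (hx : x ∉ cube n x0 (2 * √n * r)) :
    sFun n α 1 a x ≤ ENNReal.ofReal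
      (sFunDecayConst n α * (∫ z, |a z|) * r ^ α / ‖x - x0‖ ^ ((n : ℝ) + α)) := by
  set d := ‖x - x0‖
  have hd : √n * r < d := by simpa [mul_assoc] using lt_norm_sub_of_notMem_cube hx
  have hd0 : 0 < d := (by positivity : 0 ≤ √n * r).trans_lt hd
  have hball := hsupp.trans (cube_subset_closedBall x0 hr.le)
  have hfar : ∀ t, 0 < t → t ≤ d / 4 → ∀ y ∈ ball x t, intA n α a y t = 0 :=
    fun t ht htd y hy => intA_eq_zero_of_lt_norm ht fun z hz => by
      rw [← dist_eq_norm]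
      exact lt_dist_of_mem_ball_of_mem_closedBall hy (hball hz) (by rw [dist_eq_norm]; linarith)
        (by rw [dist_eq_norm]; linarith)
  refine (sFun_le_of_intA_le (by positivity) (by positivity) (by positivity) hfar
    fun t ht y _ => intA_le_of_integral_eq_zero hα ha ha0 hball ht y).trans_eq
      (congrArg ENNReal.ofReal ?_)
  rw [Real.div_rpow hd0.le (by norm_num),
    show √n * (r / 2) = √n / 2 * r by ring, Real.mul_rpow (by positivity) hr.le, sFunDecayConst]
  field_simp

end

theorem sFun_atom_decay_general (n : ℕ) (hn : 1 ≤ n) (α : ℝ) (hα0 : 0 < α)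
    (p : ℝ) (w : EuclideanSpace ℝ (Fin n) → ℝ) :
    ∃ C > 0, ∃ C' > 0, ∀ (a : EuclideanSpace ℝ (Fin n) → ℝ) (x0 : EuclideanSpace ℝ (Fin n))
      (r : ℝ) (x : EuclideanSpace ℝ (Fin n)),
      0 < r →
      MeasureTheory.Integrable a volume →
      Function.support a ⊆ cube n x0 r →
      (∫ y, a y) = 0 →
      0 < (∫ y in cube n x0 r, w y) →
      (∫ y in cube n x0 r, |a y|) ≤ r ^ n * (∫ y in cube n x0 r, w y) ^ (-(1 / p)) →
      x ∉ cube n x0 (2 * Real.sqrt n * r) →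
      sFun n α 1 a x ≤
        ENNReal.ofReal (C * r ^ ((n : ℝ) + α) /
          ((∫ y in cube n x0 r, w y) ^ (1 / p) * ‖x - x0‖ ^ ((n : ℝ) + α))) ∧
      sFun n α 1 a x ≤
        ENNReal.ofReal (C' * (∫ y in cube n x0 r, w y) ^ (-(1 / p))) := by
  set C := sFunDecayConst n α
  have hC : 0 < C := sFunDecayConst_pos hn hα0
  refine ⟨C, hC, C, hC, fun a x0 r x hr ha hsupp ha0 hW hatom hx => ?_⟩
  set W := ∫ y in cube n x0 r, w y
  set d := ‖x - x0‖
  have hL1 : ∫ z, |a z| ≤ r ^ n * W ^ (-(1 / p)) := by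
    rwa [← setIntegral_eq_integral_of_forall_compl_eq_zero fun z hz =>
      abs_eq_zero.2 (Function.notMem_support.1 fun h => hz (hsupp h))]
  have hrd : r ≤ d := calc
    r ≤ √n * r := le_mul_of_one_le_left hr.le (Real.one_le_sqrt.2 (by exact_mod_cast hn))
    _ ≤ d := by simpa [mul_assoc] using (lt_norm_sub_of_notMem_cube hx).le
  have hbound : sFun n α 1 a x ≤
      ENNReal.ofReal (C * W ^ (-(1 / p)) * (r ^ ((n : ℝ) + α) / d ^ ((n : ℝ) + α))) := by
    refine (sFun_le_of_support_subset_cube hα0 ha ha0 hr hsupp hx).trans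
      (ENNReal.ofReal_le_ofReal ?_)
    rw [show C * W ^ (-(1 / p)) * (r ^ ((n : ℝ) + α) / d ^ ((n : ℝ) + α)) =
        C * (r ^ n * W ^ (-(1 / p))) * r ^ α / d ^ ((n : ℝ) + α) by
      rw [Real.rpow_add hr, Real.rpow_natCast]; ring]
    gcongr
  constructor
  · refine hbound.trans_eq (congrArg ENNReal.ofReal ?_)
    rw [Real.rpow_neg hW.le]
    field_simp
  · refine hbound.trans (ENNReal.ofReal_le_ofReal (mul_le_of_le_one_right (by positivity) ?_))
    exact div_le_one_of_le₀ (by gcongr) (by positivity)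

/-- Decay of the intrinsic Lusin area function of an atom outside the expanded cube. -/
theorem sFun_atom_decay (n : ℕ) (hn : 1 ≤ n) (α : ℝ) (hα0 : 0 < α) (hα1 : α < 1)
    (p : ℝ) (hpdef : p = n / (n + α))
    (w : EuclideanSpace ℝ (Fin n) → ℝ) (hw : ∀ x, 0 ≤ w x)
    (hloc : MeasureTheory.LocallyIntegrable w volume) :
    ∃ C > 0, ∃ C' > 0, ∀ (a : EuclideanSpace ℝ (Fin n) → ℝ) (x0 : EuclideanSpace ℝ (Fin n))
      (r : ℝ) (x : EuclideanSpace ℝ (Fin n)),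
      0 < r →
      MeasureTheory.Integrable a volume →
      Function.support a ⊆ cube n x0 r →
      (∫ y, a y) = 0 →
      0 < (∫ y in cube n x0 r, w y) →
      (∫ y in cube n x0 r, |a y|) ≤ r ^ n * (∫ y in cube n x0 r, w y) ^ (-(1 / p)) →
      x ∉ cube n x0 (2 * Real.sqrt n * r) →
      sFun n α 1 a x ≤
        ENNReal.ofReal (C * r ^ ((n : ℝ) + α) /
          ((∫ y in cube n x0 r, w y) ^ (1 / p) * ‖x - x0‖ ^ ((n : ℝ) + α))) ∧
      sFun n α 1 a x ≤
        ENNReal.ofReal (C' * (∫ y in cube n x0 r, w y) ^ (-(1 / p))) :=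
  sFun_atom_decay_general n hn α hα0 p w
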